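/- arXiv:2511.10814 — 3 statements merged into one kernel-verified Lean document; each statement's English description precedes it below -/
import Mathlib

section
/- Let n be a positive integer, k > 0, let A : ℝ → Mₙ(ℝ), and let K : ℝ → Mₙ(ℝ) be differentiable with K(t) symmetric positive definite for every t and K'(t) ⪰ A(t)·K(t) + K(t)·A(t)ᵀ + k·K(t) for all t. Let x : ℝ → ℝⁿ be differentiable with x'(t) = A(t)·x(t) for all t. Then the function V(t) := x(t)ᵀ·K(t)⁻¹·x(t) satisfies V(t) ≤ e^{−k(t−s)}·V(s) for all s ≤ t. -/
/-!
Write `V(t) = y ⬝ᵥ K(t) y` with `y = K(t)⁻¹ x(t)`. Differentiating `K⁻¹` and using `x' = A x`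
gives `V' = y ⬝ᵥ (A K + K Aᵀ - K') y`, which the stability hypothesis bounds by `-k V`.
Grönwall's inequality then yields `V(t) ≤ e^{-k(t-s)} V(s)`.
-/

open Matrix
open scoped Matrix.Norms.L2Operator

section Calculus

variable {𝕜 m n : Type*} [RCLike 𝕜] [Fintype m] [Fintype n] {t : 𝕜}

theorem HasDerivAt.dotProduct {u v : 𝕜 → n → 𝕜} {u' v' : n → 𝕜}
    (hu : HasDerivAt u u' t) (hv : HasDerivAt v v' t) :
    HasDerivAt (fun t => u t ⬝ᵥ v t) (u' ⬝ᵥ v t + u t ⬝ᵥ v') t := by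
  simpa [add_comm] using (dotProductBilin 𝕜 𝕜 (m := n) (A := 𝕜)).toContinuousBilinearMap
    |>.hasDerivAt_of_bilinear (fun _ => hu) (fun _ => hv)

theorem HasDerivAt.mulVec [DecidableEq n] {M : 𝕜 → Matrix m n 𝕜} {v : 𝕜 → n → 𝕜}
    {M' : Matrix m n 𝕜} {v' : n → 𝕜} (hM : HasDerivAt M M' t) (hv : HasDerivAt v v' t) :
    HasDerivAt (fun t => M t *ᵥ v t) (M' *ᵥ v t + M t *ᵥ v') t := by
  simpa [add_comm] using (mulVecBilin 𝕜 𝕜 (m := m) (n := n) (A := 𝕜)).toContinuousBilinearMap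
    |>.hasDerivAt_of_bilinear (fun _ => hM) (fun _ => hv)

theorem HasDerivAt.matrix_inv [DecidableEq n] {K : 𝕜 → Matrix n n 𝕜} {K' : Matrix n n 𝕜}
    (hK : HasDerivAt K K' t) (hdet : IsUnit (K t).det) :
    HasDerivAt (fun t => (K t)⁻¹) (-((K t)⁻¹ * K' * (K t)⁻¹)) t := by
  obtain ⟨u, hu⟩ := (isUnit_iff_isUnit_det _).2 hdet
  have := (hu ▸ hasFDerivAt_ringInverse (𝕜 := 𝕜) u).comp_hasDerivAt t hK
  simp only [coe_units_inv, hu] at this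
  rwa [show (fun t => (K t)⁻¹) = Ring.inverse ∘ K from
    funext fun s => nonsing_inv_eq_ringInverse (K s)]

end Calculus

theorem le_exp_mul_of_hasDerivAt_le_mul {V V' : ℝ → ℝ} {c : ℝ}
    (hV : ∀ t, HasDerivAt V (V' t) t) (hle : ∀ t, V' t ≤ c * V t) {s t : ℝ} (hst : s ≤ t) :
    V t ≤ Real.exp (c * (t - s)) * V s := by
  have := le_gronwallBound_of_liminf_deriv_right_le (f' := V') (ε := 0) (b := t)
    (fun u _ => (hV u).continuousAt.continuousWithinAt)
    (fun u _ _ hr => (hV u).hasDerivWithinAt.liminf_right_slope_le hr) le_rfl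
    (fun u _ => by simpa using hle u) t ⟨hst, le_rfl⟩
  rwa [gronwallBound_ε0, mul_comm] at this

theorem Matrix.IsSymm.mulVec_dotProduct {n : Type*} [Fintype n] {K : Matrix n n ℝ} (hK : K.IsSymm)
    (v w : n → ℝ) : (K *ᵥ v) ⬝ᵥ w = v ⬝ᵥ (K *ᵥ w) := by
  rw [dotProduct_comm, dotProduct_mulVec, ← mulVec_transpose, hK.eq, dotProduct_comm]

section Lyapunov

variable {n : Type*} [Fintype n] [DecidableEq n]

theorem exists_eq_mulVec_of_isUnit_det {K : Matrix n n ℝ} (hdet : IsUnit K.det) (x : n → ℝ) :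
    ∃ y, x = K *ᵥ y ∧ K⁻¹ *ᵥ x = y :=
  ⟨K⁻¹ *ᵥ x, by rw [mulVec_mulVec, mul_nonsing_inv _ hdet, one_mulVec], rfl⟩

theorem lyapunov_deriv_eq {K K' A : Matrix n n ℝ} (hK : K.IsSymm) (hdet : IsUnit K.det)
    (x : n → ℝ) :
    (A *ᵥ x) ⬝ᵥ (K⁻¹ *ᵥ x) + x ⬝ᵥ (-(K⁻¹ * K' * K⁻¹) *ᵥ x + K⁻¹ *ᵥ (A *ᵥ x)) =
      (K⁻¹ *ᵥ x) ⬝ᵥ ((A * K + K * Aᵀ - K') *ᵥ (K⁻¹ *ᵥ x)) := by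
  obtain ⟨y, rfl, -⟩ := exists_eq_mulVec_of_isUnit_det hdet x
  have hKKinv (z : n → ℝ) : K *ᵥ (K⁻¹ *ᵥ z) = z := by
    rw [mulVec_mulVec, mul_nonsing_inv _ hdet, one_mulVec]
  have hKinvK (z : n → ℝ) : K⁻¹ *ᵥ (K *ᵥ z) = z := by
    rw [mulVec_mulVec, nonsing_inv_mul _ hdet, one_mulVec]
  have hAT : y ⬝ᵥ (K *ᵥ (Aᵀ *ᵥ y)) = y ⬝ᵥ (A *ᵥ (K *ᵥ y)) := by
    rw [← hK.mulVec_dotProduct, dotProduct_mulVec, vecMul_transpose, dotProduct_comm]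
  simp only [hKinvK, ← mulVec_mulVec, neg_mulVec, sub_mulVec, add_mulVec, mulVec_add,
    mulVec_neg, hKKinv, dotProduct_add, dotProduct_sub, dotProduct_neg, hAT,
    dotProduct_comm (A *ᵥ (K *ᵥ y)) y, hK.mulVec_dotProduct]
  ring

theorem hasDerivAt_dotProduct_inv_mulVec {K : ℝ → Matrix n n ℝ} {x : ℝ → n → ℝ}
    {K' A : Matrix n n ℝ} {t : ℝ} (hK : HasDerivAt K K' t) (hsymm : (K t).IsSymm)
    (hdet : IsUnit (K t).det)
    (hx : HasDerivAt x (A *ᵥ x t) t) :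
    HasDerivAt (fun t => x t ⬝ᵥ ((K t)⁻¹ *ᵥ x t))
      (((K t)⁻¹ *ᵥ x t) ⬝ᵥ ((A * K t + K t * Aᵀ - K') *ᵥ ((K t)⁻¹ *ᵥ x t))) t := by
  rw [← lyapunov_deriv_eq hsymm hdet]
  exact hx.dotProduct ((hK.matrix_inv hdet).mulVec hx)

theorem lyapunov_deriv_le {K K' A : Matrix n n ℝ} {k : ℝ} (hdet : IsUnit K.det)
    (hstab : (K' - (A * K + K * Aᵀ + k • K)).PosSemidef) (x : n → ℝ) :
    (K⁻¹ *ᵥ x) ⬝ᵥ ((A * K + K * Aᵀ - K') *ᵥ (K⁻¹ *ᵥ x)) ≤ -k * (x ⬝ᵥ (K⁻¹ *ᵥ x)) := by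
  obtain ⟨y, rfl, hy⟩ := exists_eq_mulVec_of_isUnit_det hdet x
  have hnonneg := hstab.dotProduct_mulVec_nonneg y
  simp only [star_trivial, sub_mulVec, add_mulVec, smul_mulVec, dotProduct_sub,
    dotProduct_add, dotProduct_smul, smul_eq_mul] at hnonneg
  rw [hy, sub_mulVec, add_mulVec, dotProduct_sub, dotProduct_add, dotProduct_comm (K *ᵥ y)]
  linarith

end Lyapunov

theorem stmt8_general (n : ℕ) (k : ℝ)
    (A K' : ℝ → Matrix (Fin n) (Fin n) ℝ)
    (K : ℝ → Matrix (Fin n) (Fin n) ℝ)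
    (hKderiv : ∀ t, HasDerivAt K (K' t) t)
    (hKpd : ∀ t, (K t).PosDef)
    (hstab : ∀ t, (K' t - (A t * K t + K t * (A t)ᵀ + k • K t)).PosSemidef)
    (x : ℝ → Fin n → ℝ)
    (hx : ∀ t, HasDerivAt x (A t *ᵥ x t) t) :
    ∀ s t, s ≤ t →
      x t ⬝ᵥ ((K t)⁻¹ *ᵥ x t) ≤
        Real.exp (-k * (t - s)) * (x s ⬝ᵥ ((K s)⁻¹ *ᵥ x s)) := by
  have hdet (t : ℝ) : IsUnit (K t).det := (hKpd t).det_pos.ne'.isUnit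
  intro s t hst
  exact le_exp_mul_of_hasDerivAt_le_mul
    (fun u => hasDerivAt_dotProduct_inv_mulVec (hKderiv u) (isHermitian_iff_isSymm.1 (hKpd u).1)
      (hdet u) (hx u))
    (fun u => lyapunov_deriv_le (hdet u) (hstab u) (x u)) hst

/-- Lyapunov decay: if `K(t)` is differentiable, symmetric positive
definite with `K'(t) ⪰ A(t)K(t) + K(t)A(t)ᵀ + kK(t)` (i.e. `A` is `(K, k)`-stable)
and `x' = A x`, then `V(t) = x(t)ᵀK(t)⁻¹x(t)` satisfies
`V(t) ≤ e^{-k(t-s)} V(s)` for all `s ≤ t`. -/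
theorem stmt8 (n : ℕ) (k : ℝ) (hk : 0 < k)
    (A K' : ℝ → Matrix (Fin n) (Fin n) ℝ)
    (K : ℝ → Matrix (Fin n) (Fin n) ℝ)
    (hKderiv : ∀ t, HasDerivAt K (K' t) t)
    (hKpd : ∀ t, (K t).PosDef)
    (hstab : ∀ t, (K' t - (A t * K t + K t * (A t)ᵀ + k • K t)).PosSemidef)
    (x : ℝ → Fin n → ℝ)
    (hx : ∀ t, HasDerivAt x (A t *ᵥ x t) t) :
    ∀ s t, s ≤ t →
      x t ⬝ᵥ ((K t)⁻¹ *ᵥ x t) ≤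
        Real.exp (-k * (t - s)) * (x s ⬝ᵥ ((K s)⁻¹ *ᵥ x s)) :=
  stmt8_general n k A K' K hKderiv hKpd hstab x hx
end

section
/- Let n be a positive integer, k > 0, 0 < m ≤ M real constants, let A : ℝ → Mₙ(ℝ), and let K : ℝ → Mₙ(ℝ) be differentiable with K(t) symmetric, m·I ⪯ K(t) ⪯ M·I, and K'(t) ⪰ A(t)·K(t) + K(t)·A(t)ᵀ + k·K(t) for all t. Let x : ℝ → ℝⁿ be differentiable with x'(t) = A(t)·x(t) for all t. Then for all s ≤ t, ‖x(t)‖ ≤ √(M/m)·e^{−(k/2)(t−s)}·‖x(s)‖. -/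
/-!
`V(t) = x(t)ᵀ K(t)⁻¹ x(t)` is a Lyapunov function: by the stability inequality its derivative
along `ẋ = A x` is at most `-k V`, so Grönwall gives `V(t) ≤ e^{-k(t-s)} V(s)`. Inversion reverses
the Loewner order (conjugate by `K^{-1/2}`), so `m ≤ K ≤ M` yields `‖x‖² / M ≤ V ≤ ‖x‖² / m`,
which converts the decay of `V` into that of `‖x‖` at the cost of the factor `√(M/m)`.
-/

open Matrix
open scoped Matrix.Norms.L2Operator MatrixOrder

namespace Matrix

section Calculus

variable {ι : Type*} [Fintype ι] {u v : ℝ → ι → ℝ} {u' v' : ι → ℝ}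
  {P : ℝ → Matrix ι ι ℝ} {P' : Matrix ι ι ℝ} {t : ℝ}

theorem _root_.HasDerivAt.dotProduct_s9 (hu : HasDerivAt u u' t) (hv : HasDerivAt v v' t) :
    HasDerivAt (fun s ↦ u s ⬝ᵥ v s) (u' ⬝ᵥ v t + u t ⬝ᵥ v') t := by
  simpa [add_comm] using (dotProductBilin ℝ ℝ (m := ι) (A := ℝ)).toContinuousBilinearMap
    |>.hasDerivAt_of_bilinear (fun _ ↦ hu) (fun _ ↦ hv)

variable [DecidableEq ι]

theorem _root_.HasDerivAt.mulVec_s9 (hP : HasDerivAt P P' t) (hv : HasDerivAt v v' t) :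
    HasDerivAt (fun s ↦ P s *ᵥ v s) (P' *ᵥ v t + P t *ᵥ v') t := by
  simpa [add_comm] using (mulVecBilin ℝ ℝ (m := ι) (n := ι) (A := ℝ)).toContinuousBilinearMap
    |>.hasDerivAt_of_bilinear (fun _ ↦ hP) (fun _ ↦ hv)

theorem _root_.HasDerivAt.nonsing_inv (hP : HasDerivAt P P' t)
    (h : IsUnit (P t)) : HasDerivAt (fun s ↦ (P s)⁻¹) (-((P t)⁻¹ * P' * (P t)⁻¹)) t := by
  obtain ⟨U, hU⟩ := h
  have hinv := hasFDerivAt_ringInverse (𝕜 := ℝ) U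
  rw [hU] at hinv
  have hU' : ((U⁻¹ : (Matrix ι ι ℝ)ˣ) : Matrix ι ι ℝ) = (P t)⁻¹ := by
    rw [← hU, coe_units_inv]
  have := hinv.comp_hasDerivAt t hP
  simp only [hU', _root_.neg_apply, ContinuousLinearMap.mulLeftRight_apply] at this
  simpa only [Function.comp_def, ← nonsing_inv_eq_ringInverse] using this

end Calculus

section LoewnerOrder

variable {ι : Type*} [Fintype ι]

theorem dotProduct_mulVec_le_of_le {A B : Matrix ι ι ℝ} (h : A ≤ B) (x : ι → ℝ) :
    x ⬝ᵥ (A *ᵥ x) ≤ x ⬝ᵥ (B *ᵥ x) := by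
  simpa [sub_mulVec] using (le_iff.mp h).dotProduct_mulVec_nonneg x

variable [DecidableEq ι] {K : Matrix ι ι ℝ}

theorem PosDef.star_sqrt_inv_mul_self_mul_sqrt_inv (hK : K.PosDef) :
    star (CFC.sqrt K⁻¹) * K * CFC.sqrt K⁻¹ = 1 := by
  rw [(CFC.sqrt_nonneg K⁻¹).isSelfAdjoint.star_eq, ← hK.posSemidef.inv_sqrt]
  set S := CFC.sqrt K
  have hS : IsUnit S.det := by
    rw [hK.posSemidef.det_sqrt, RCLike.sqrt_real]
    exact (Real.sqrt_pos.2 hK.det_pos).ne'.isUnit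
  have hSS : S * S = K := CFC.sqrt_mul_sqrt_self K hK.posSemidef.nonneg
  rw [← hSS, ← mul_assoc, nonsing_inv_mul _ hS, one_mul, mul_nonsing_inv _ hS]

theorem PosDef.star_sqrt_inv_mul_sqrt_inv (hK : K.PosDef) :
    star (CFC.sqrt K⁻¹) * CFC.sqrt K⁻¹ = K⁻¹ := by
  rw [(CFC.sqrt_nonneg K⁻¹).isSelfAdjoint.star_eq]
  exact CFC.sqrt_mul_sqrt_self _ hK.inv.posSemidef.nonneg

theorem PosDef.one_le_smul_inv_of_le_smul_one (hK : K.PosDef) {c : ℝ} (h : K ≤ c • 1) :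
    1 ≤ c • K⁻¹ := by
  simpa [hK.star_sqrt_inv_mul_self_mul_sqrt_inv, hK.star_sqrt_inv_mul_sqrt_inv] using
    star_left_conjugate_le_conjugate h (CFC.sqrt K⁻¹)

theorem PosDef.smul_inv_le_one_of_smul_one_le (hK : K.PosDef) {c : ℝ} (h : c • 1 ≤ K) :
    c • K⁻¹ ≤ 1 := by
  simpa [hK.star_sqrt_inv_mul_self_mul_sqrt_inv, hK.star_sqrt_inv_mul_sqrt_inv] using
    star_left_conjugate_le_conjugate h (CFC.sqrt K⁻¹)

end LoewnerOrder

section Lyapunov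

variable {ι : Type*} [Fintype ι] [DecidableEq ι] {K : Matrix ι ι ℝ}

/- Writing `x = K y`, the left side is `yᵀ (A K + K Aᵀ - K') y`, which `hstab` bounds by
`-k yᵀ K y = -k xᵀ K⁻¹ x`. -/
theorem PosDef.lyapunov_deriv_le {A K' : Matrix ι ι ℝ} {k : ℝ} (hK : K.PosDef)
    (hstab : (K' - (A * K + K * Aᵀ + k • K)).PosSemidef) (x : ι → ℝ) :
    (A *ᵥ x) ⬝ᵥ (K⁻¹ *ᵥ x) + x ⬝ᵥ (-(K⁻¹ * K' * K⁻¹) *ᵥ x + K⁻¹ *ᵥ (A *ᵥ x)) ≤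
      -k * (x ⬝ᵥ (K⁻¹ *ᵥ x)) := by
  have hKt : Kᵀ = K := by simpa using hK.isHermitian.eq
  have hdet : IsUnit K.det := (isUnit_iff_isUnit_det K).mp hK.isUnit
  have hKK : K⁻¹ * K = 1 := nonsing_inv_mul _ hdet
  obtain ⟨y, rfl⟩ : ∃ y, x = K *ᵥ y :=
    ⟨K⁻¹ *ᵥ x, by rw [mulVec_mulVec, mul_nonsing_inv _ hdet, one_mulVec]⟩
  have hdot : ∀ v, (K *ᵥ y) ⬝ᵥ (K⁻¹ *ᵥ v) = y ⬝ᵥ v := fun v ↦ by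
    rw [dotProduct_mulVec, vecMul_mulVec, ← mulVec_transpose, transpose_mul, transpose_nonsing_inv]
    simp only [hKt, hKK, one_mulVec]
  have hsymm : y ⬝ᵥ ((K * Aᵀ) *ᵥ y) = y ⬝ᵥ ((A * K) *ᵥ y) := by
    rw [dotProduct_mulVec, ← mulVec_transpose, transpose_mul, transpose_transpose, hKt,
      dotProduct_comm]
  have hquad := hstab.dotProduct_mulVec_nonneg y
  simp only [star_trivial, sub_mulVec, add_mulVec, smul_mulVec, dotProduct_sub, dotProduct_add,
    dotProduct_smul, smul_eq_mul, hsymm] at hquad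
  rw [neg_mulVec, dotProduct_add, dotProduct_neg, Matrix.mul_assoc, ← mulVec_mulVec, hdot, hdot,
    hdot, ← mulVec_mulVec, mulVec_mulVec _ K⁻¹, hKK, one_mulVec, dotProduct_comm, mulVec_mulVec]
  linarith

end Lyapunov

end Matrix

theorem le_mul_exp_of_hasDerivAt_le {V V' : ℝ → ℝ} {c s t : ℝ}
    (hV : ∀ u, HasDerivAt V (V' u) u) (hle : ∀ u, V' u ≤ c * V u) (hst : s ≤ t) :
    V t ≤ V s * Real.exp (c * (t - s)) := by
  have := le_gronwallBound_of_liminf_deriv_right_le (δ := V s) (ε := 0)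
    (fun u _ ↦ (hV u).continuousAt.continuousWithinAt)
    (fun u _ _ hr ↦ (hV u).hasDerivWithinAt.liminf_right_slope_le hr) le_rfl
    (fun u _ ↦ by simpa using hle u) t ⟨hst, le_rfl⟩
  rwa [gronwallBound_ε0] at this

theorem stmt9_general (n : ℕ) (k m M : ℝ) (hm : 0 < m) (hmM : m ≤ M)
    (A K' : ℝ → Matrix (Fin n) (Fin n) ℝ)
    (K : ℝ → Matrix (Fin n) (Fin n) ℝ)
    (hKderiv : ∀ t, HasDerivAt K (K' t) t)
    (hKlow : ∀ t, (K t - m • (1 : Matrix (Fin n) (Fin n) ℝ)).PosSemidef)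
    (hKupp : ∀ t, (M • (1 : Matrix (Fin n) (Fin n) ℝ) - K t).PosSemidef)
    (hstab : ∀ t, (K' t - (A t * K t + K t * (A t)ᵀ + k • K t)).PosSemidef)
    (x : ℝ → Fin n → ℝ)
    (hx : ∀ t, HasDerivAt x (A t *ᵥ x t) t) :
    ∀ s t, s ≤ t →
      Real.sqrt (x t ⬝ᵥ x t) ≤
        Real.sqrt (M / m) * Real.exp (-(k / 2) * (t - s)) * Real.sqrt (x s ⬝ᵥ x s) := by
  intro s t hst
  have hM : 0 < M := hm.trans_le hmM
  have hKpos : ∀ u, (K u).PosDef := fun u ↦ by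
    simpa using PosDef.posSemidef_add (hKlow u) (PosDef.one.smul hm)
  set V : ℝ → ℝ := fun u ↦ x u ⬝ᵥ ((K u)⁻¹ *ᵥ x u)
  have hV : ∀ u, HasDerivAt V _ u := fun u ↦
    (hx u).dotProduct_s9 (((hKderiv u).nonsing_inv (hKpos u).isUnit).mulVec_s9 (hx u))
  have hdecay : V t ≤ V s * Real.exp (-k * (t - s)) :=
    le_mul_exp_of_hasDerivAt_le hV (fun u ↦ (hKpos u).lyapunov_deriv_le (hstab u) (x u)) hst
  have hupper : x t ⬝ᵥ x t ≤ M * V t := by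
    simpa [V, smul_mulVec, dotProduct_smul] using dotProduct_mulVec_le_of_le
      ((hKpos t).one_le_smul_inv_of_le_smul_one (le_iff.mpr (hKupp t))) (x t)
  have hlower : m * V s ≤ x s ⬝ᵥ x s := by
    simpa [V, smul_mulVec, dotProduct_smul] using dotProduct_mulVec_le_of_le
      ((hKpos s).smul_inv_le_one_of_smul_one_le (le_iff.mpr (hKlow s))) (x s)
  have hsq : x t ⬝ᵥ x t ≤ M / m * Real.exp (-(k / 2) * (t - s)) ^ 2 * (x s ⬝ᵥ x s) :=
    calc x t ⬝ᵥ x t ≤ M * (V s * Real.exp (-k * (t - s))) := hupper.trans (by gcongr)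
      _ ≤ M * ((x s ⬝ᵥ x s) / m * Real.exp (-k * (t - s))) := by
        gcongr
        rwa [le_div_iff₀' hm]
      _ = M / m * Real.exp (-(k / 2) * (t - s)) ^ 2 * (x s ⬝ᵥ x s) := by
        rw [← Real.exp_nat_mul]
        ring_nf
  calc Real.sqrt (x t ⬝ᵥ x t)
      ≤ Real.sqrt (M / m * Real.exp (-(k / 2) * (t - s)) ^ 2 * (x s ⬝ᵥ x s)) :=
        Real.sqrt_le_sqrt hsq
    _ = _ := by
        rw [Real.sqrt_mul (by positivity), Real.sqrt_mul (by positivity),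
          Real.sqrt_sq (Real.exp_pos _).le]

/-- If `A(t)` is `(K(t), k)`-stable with `K(t)` symmetric and
`m·I ⪯ K(t) ⪯ M·I` (`0 < m ≤ M`), then every solution of `x' = A x` satisfies
`‖x(t)‖ ≤ √(M/m)·e^{-(k/2)(t-s)}·‖x(s)‖` for all `s ≤ t`, where `‖·‖` is the
Euclidean norm, written here as `√(x ⬝ᵥ x)`. -/
theorem stmt9 (n : ℕ) (k m M : ℝ) (hk : 0 < k) (hm : 0 < m) (hmM : m ≤ M)
    (A K' : ℝ → Matrix (Fin n) (Fin n) ℝ)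
    (K : ℝ → Matrix (Fin n) (Fin n) ℝ)
    (hKderiv : ∀ t, HasDerivAt K (K' t) t)
    (hKsymm : ∀ t, (K t).IsSymm)
    (hKlow : ∀ t, (K t - m • (1 : Matrix (Fin n) (Fin n) ℝ)).PosSemidef)
    (hKupp : ∀ t, (M • (1 : Matrix (Fin n) (Fin n) ℝ) - K t).PosSemidef)
    (hstab : ∀ t, (K' t - (A t * K t + K t * (A t)ᵀ + k • K t)).PosSemidef)
    (x : ℝ → Fin n → ℝ)
    (hx : ∀ t, HasDerivAt x (A t *ᵥ x t) t) :
    ∀ s t, s ≤ t →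
      Real.sqrt (x t ⬝ᵥ x t) ≤
        Real.sqrt (M / m) * Real.exp (-(k / 2) * (t - s)) * Real.sqrt (x s ⬝ᵥ x s) :=
  stmt9_general n k m M hm hmM A K' K hKderiv hKlow hKupp hstab x hx
end

section
/- Let n be a positive integer and let A : ℝ → Mₙ(ℝ) be continuous with ‖A(t)‖ ≤ L for all t and some constant L. Let ζ : ℝ → Mₙ(ℝ) be the fundamental solution, i.e. ζ'(t) = A(t)·ζ(t) with ζ(0) = I, and note that ζ(t) is invertible for every t. Suppose there exist constants C, c > 0 such that ‖ζ(t)·ζ(s)⁻¹‖ ≤ C·e^{−c(t−s)} for all s ≤ t. Then for every k with 0 < k < 2c there exist constants 0 < m ≤ M and a differentiable family K : ℝ → Mₙ(ℝ) with K(t) symmetric, m·I ⪯ K(t) ⪯ M·I, and K'(t) ⪰ A(t)·K(t) + K(t)·A(t)ᵀ + k·K(t) for all t. -/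
/-!
With `Φ(t, s) = ζ(t) ζ(s)⁻¹`, take the averaged Gramian
`K(t) = ∫_{t-T}^{t} e^{k(t-s)} Φ(t, s) Φ(t, s)ᵀ ds`.
Differentiating, `K' = A K + K Aᵀ + k K + (I - e^{kT} Φ(t, t-T) Φ(t, t-T)ᵀ)`, and the last term
is positive semidefinite as soon as `e^{kT} C² e^{-2cT} ≤ 1`, which holds for `T` large because
`k < 2c`. On the window `t - T ≤ s ≤ t` the integrand is at most `C²` (exponential stability) and
at least `e^{-2LT}` (Grönwall applied backwards in time), so `K` is bounded and elliptic.
-/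

open Matrix MeasureTheory Real Set
open scoped Matrix.Norms.L2Operator

variable {ι : Type*} [Fintype ι]

namespace Matrix

theorem dotProduct_mul_transpose_mulVec (P : Matrix ι ι ℝ) (v : ι → ℝ) :
    v ⬝ᵥ (P * Pᵀ) *ᵥ v = (Pᵀ *ᵥ v) ⬝ᵥ (Pᵀ *ᵥ v) := by
  rw [← mulVec_mulVec, dotProduct_mulVec, mulVec_transpose]

theorem dotProduct_self_eq_norm_sq (v : ι → ℝ) :
    v ⬝ᵥ v = ‖(EuclideanSpace.equiv ι ℝ).symm v‖ ^ 2 := by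
  rw [EuclideanSpace.real_norm_sq_eq]
  simp [dotProduct, sq]

theorem dotProduct_self_nonneg (v : ι → ℝ) : 0 ≤ v ⬝ᵥ v := by
  simpa using dotProduct_star_self_nonneg v

theorem PosSemidef.of_isSymm {X : Matrix ι ι ℝ} (hX : X.IsSymm)
    (h : ∀ v, 0 ≤ v ⬝ᵥ X *ᵥ v) : X.PosSemidef :=
  .of_dotProduct_mulVec_nonneg (isHermitian_iff_isSymm.2 hX) (by simpa using h)

variable [DecidableEq ι]

theorem posSemidef_sub_smul_one {X : Matrix ι ι ℝ} {m : ℝ} (hX : X.IsSymm)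
    (h : ∀ v, m * (v ⬝ᵥ v) ≤ v ⬝ᵥ X *ᵥ v) : (X - m • 1).PosSemidef :=
  .of_isSymm (hX.sub (isSymm_one.smul m)) fun v => by
    simpa [sub_mulVec, smul_mulVec] using h v

theorem posSemidef_smul_one_sub {X : Matrix ι ι ℝ} {M : ℝ} (hX : X.IsSymm)
    (h : ∀ v, v ⬝ᵥ X *ᵥ v ≤ M * (v ⬝ᵥ v)) : (M • 1 - X).PosSemidef :=
  .of_isSymm ((isSymm_one.smul M).sub hX) fun v => by
    simpa [sub_mulVec, smul_mulVec] using h v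

theorem dotProduct_transpose_mulVec_self_le (P : Matrix ι ι ℝ) (v : ι → ℝ) :
    (Pᵀ *ᵥ v) ⬝ᵥ (Pᵀ *ᵥ v) ≤ ‖P‖ ^ 2 * (v ⬝ᵥ v) := by
  rw [dotProduct_self_eq_norm_sq, dotProduct_self_eq_norm_sq, ← mul_pow,
    ← l2_opNorm_conjTranspose, conjTranspose_eq_transpose_of_trivial]
  exact pow_le_pow_left₀ (norm_nonneg _) (l2_opNorm_mulVec Pᵀ _) 2

theorem dotProduct_self_le_of_mul_eq_one {P Q : Matrix ι ι ℝ} (hPQ : P * Q = 1) (v : ι → ℝ) :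
    v ⬝ᵥ v ≤ ‖Q‖ ^ 2 * ((Pᵀ *ᵥ v) ⬝ᵥ (Pᵀ *ᵥ v)) := by
  have hv : Qᵀ *ᵥ (Pᵀ *ᵥ v) = v := by
    rw [mulVec_mulVec, ← transpose_mul, hPQ, transpose_one, one_mulVec]
  simpa [hv] using dotProduct_transpose_mulVec_self_le Q (Pᵀ *ᵥ v)

theorem posSemidef_one_sub_smul_mul_transpose {P : Matrix ι ι ℝ} {r : ℝ} (hr : 0 ≤ r)
    (hP : r * ‖P‖ ^ 2 ≤ 1) : (1 - r • (P * Pᵀ)).PosSemidef := by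
  refine .of_isSymm (isSymm_one.sub ((isSymm_mul_transpose_self P).smul r)) fun v => ?_
  have hPv := dotProduct_transpose_mulVec_self_le P v
  rw [sub_mulVec, one_mulVec, smul_mulVec, dotProduct_sub, dotProduct_smul, smul_eq_mul,
    dotProduct_mul_transpose_mulVec]
  nlinarith [dotProduct_self_nonneg v]

theorem l2_opNorm_one_le : ‖(1 : Matrix ι ι ℝ)‖ ≤ 1 := by
  rw [cstar_norm_def, map_one]
  exact ContinuousLinearMap.norm_id_le

noncomputable def transposeCLM : Matrix ι ι ℝ →L[ℝ] Matrix ι ι ℝ :=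
  LinearMap.toContinuousLinearMap (transposeLinearEquiv ι ι ℝ ℝ).toLinearMap

theorem transpose_intervalIntegral {f : ℝ → Matrix ι ι ℝ} {a b : ℝ}
    (hf : IntervalIntegrable f volume a b) :
    (∫ s in a..b, f s)ᵀ = ∫ s in a..b, (f s)ᵀ :=
  (transposeCLM.intervalIntegral_comp_comm hf).symm

theorem dotProduct_intervalIntegral_mulVec {f : ℝ → Matrix ι ι ℝ} {a b : ℝ}
    (hf : IntervalIntegrable f volume a b) (v : ι → ℝ) :
    v ⬝ᵥ (∫ s in a..b, f s) *ᵥ v = ∫ s in a..b, v ⬝ᵥ f s *ᵥ v := by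
  have := (LinearMap.toContinuousLinearMap
    (LinearMap.applyₗ (R := ℝ) v ∘ₗ LinearMap.applyₗ v ∘ₗ (toLinearMap₂' ℝ (n := ι)).toLinearMap)
    |>.intervalIntegral_comp_comm hf).symm
  simpa [toLinearMap₂'_apply'] using this

end Matrix

variable [DecidableEq ι]

theorem Continuous.matrix_nonsing_inv {X : Type*} [TopologicalSpace X] {f : X → Matrix ι ι ℝ}
    (hf : Continuous f) (h : ∀ x, IsUnit (f x)) : Continuous fun x => (f x)⁻¹ := by
  refine continuous_iff_continuousAt.2 fun x => (continuousAt_matrix_inv _ ?_).comp hf.continuousAt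
  rw [Ring.inverse_eq_inv']
  exact continuousAt_inv₀ ((isUnit_iff_isUnit_det _).1 (h x)).ne_zero

theorem HasDerivAt.matrix_transpose {f : ℝ → Matrix ι ι ℝ} {f' : Matrix ι ι ℝ} {t : ℝ}
    (hf : HasDerivAt f f' t) : HasDerivAt (fun u => (f u)ᵀ) f'ᵀ t :=
  transposeCLM.hasFDerivAt.comp_hasDerivAt (f := f) t hf

theorem HasDerivAt.mul_mul_transpose {P X : ℝ → Matrix ι ι ℝ} {P' X' : Matrix ι ι ℝ} {t : ℝ}
    (hP : HasDerivAt P P' t) (hX : HasDerivAt X X' t) :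
    HasDerivAt (fun u => P u * X u * (P u)ᵀ)
      (P' * X t * (P t)ᵀ + P t * X' * (P t)ᵀ + P t * X t * P'ᵀ) t := by
  have := (hP.mul hX).mul hP.matrix_transpose
  rwa [add_mul] at this

theorem Continuous.hasDerivAt_integral_window {E : Type*} [NormedAddCommGroup E]
    [NormedSpace ℝ E] [CompleteSpace E] {g : ℝ → E} (hg : Continuous g) (T t : ℝ) :
    HasDerivAt (fun u => ∫ s in (u - T)..u, g s) (g t - g (t - T)) t := by
  have hsplit : (fun u => ∫ s in (u - T)..u, g s) =
      fun u => (∫ s in (0 : ℝ)..u, g s) - ∫ s in (0 : ℝ)..(u - T), g s := by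
    ext u
    exact (intervalIntegral.integral_interval_sub_left (hg.intervalIntegrable _ _)
      (hg.intervalIntegrable _ _)).symm
  rw [hsplit]
  refine (hg.integral_hasStrictDerivAt 0 t).hasDerivAt.sub ?_
  simpa using (hg.integral_hasStrictDerivAt 0 (t - T)).hasDerivAt.comp_sub_const t T

theorem norm_le_mul_exp_of_hasDerivAt_mul {R : Type*} [NormedRing R] [NormedAlgebra ℝ R]
    {f B : ℝ → R} {L a b : ℝ} (hf : ∀ u, HasDerivAt f (B u * f u) u) (hB : ∀ u, ‖B u‖ ≤ L)
    (hab : a ≤ b) : ‖f b‖ ≤ ‖f a‖ * exp (L * (b - a)) := by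
  have hcont : Continuous f := continuous_iff_continuousAt.2 fun u => (hf u).continuousAt
  have := norm_le_gronwallBound_of_norm_deriv_right_le (ε := 0) hcont.continuousOn
    (fun u _ => (hf u).hasDerivWithinAt) le_rfl
    (fun u _ => by simpa using norm_mul_le_of_le (hB u) le_rfl) b ⟨hab, le_rfl⟩
  rwa [gronwallBound_ε0] at this

section FundamentalSolution

variable {A ζ : ℝ → Matrix ι ι ℝ}

theorem norm_mul_inv_le_exp {L s t : ℝ} (hζ : ∀ t, HasDerivAt ζ (A t * ζ t) t)
    (hA : ∀ t, ‖A t‖ ≤ L) (hζt : IsUnit (ζ t)) (hst : s ≤ t) :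
    ‖ζ s * (ζ t)⁻¹‖ ≤ exp (L * (t - s)) := by
  -- `u ↦ ζ (-u) * (ζ t)⁻¹` solves the time-reversed equation, whose coefficient `-A (-u)`
  -- is still bounded by `L`.
  have hrev (u : ℝ) : HasDerivAt (fun u => ζ (-u) * (ζ t)⁻¹) (-A (-u) * (ζ (-u) * (ζ t)⁻¹)) u := by
    simpa [Matrix.mul_assoc] using ((hζ (-u)).scomp u (hasDerivAt_neg u)).mul_const (ζ t)⁻¹
  have := norm_le_mul_exp_of_hasDerivAt_mul hrev (fun u => by simpa using hA (-u))
    (neg_le_neg hst)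
  rw [neg_neg, neg_neg, mul_nonsing_inv _ ((isUnit_iff_isUnit_det _).1 hζt),
    neg_sub_neg] at this
  exact this.trans (mul_le_of_le_one_left (exp_pos _).le l2_opNorm_one_le)

theorem dotProduct_self_le_exp_mul_transition {L s t : ℝ} (hζ : ∀ t, HasDerivAt ζ (A t * ζ t) t)
    (hA : ∀ t, ‖A t‖ ≤ L) (hζinv : ∀ t, IsUnit (ζ t)) (hst : s ≤ t) (v : ι → ℝ) :
    v ⬝ᵥ v ≤ exp (L * (t - s)) ^ 2 * ((ζ t * (ζ s)⁻¹)ᵀ *ᵥ v ⬝ᵥ (ζ t * (ζ s)⁻¹)ᵀ *ᵥ v) := by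
  have hinv : ζ t * (ζ s)⁻¹ * (ζ s * (ζ t)⁻¹) = 1 := by
    rw [Matrix.mul_assoc, ← Matrix.mul_assoc (ζ s)⁻¹,
      nonsing_inv_mul _ ((isUnit_iff_isUnit_det _).1 (hζinv s)), Matrix.one_mul,
      mul_nonsing_inv _ ((isUnit_iff_isUnit_det _).1 (hζinv t))]
  refine (dotProduct_self_le_of_mul_eq_one hinv v).trans
    (mul_le_mul_of_nonneg_right ?_ (dotProduct_self_nonneg _))
  exact pow_le_pow_left₀ (norm_nonneg _) (norm_mul_inv_le_exp hζ hA (hζinv t) hst) 2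

end FundamentalSolution

section Lyapunov

variable (ζ : ℝ → Matrix ι ι ℝ) (k T : ℝ)

noncomputable def lyapunovWeight (s : ℝ) : Matrix ι ι ℝ :=
  exp (-(k * s)) • ((ζ s)⁻¹ * ((ζ s)⁻¹)ᵀ)

/-- `∫_{t-T}^{t} e^{k(t-s)} Φ(t, s) Φ(t, s)ᵀ ds` with `Φ(t, s) = ζ t * (ζ s)⁻¹`, written so that
`t` enters only outside the integral and through its bounds. -/
noncomputable def lyapunovFamily (t : ℝ) : Matrix ι ι ℝ :=
  exp (k * t) • (ζ t * (∫ s in (t - T)..t, lyapunovWeight ζ k s) * (ζ t)ᵀ)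

theorem exp_smul_mul_lyapunovWeight_mul_transpose (t s : ℝ) :
    exp (k * t) • (ζ t * lyapunovWeight ζ k s * (ζ t)ᵀ) =
      exp (k * (t - s)) • (ζ t * (ζ s)⁻¹ * (ζ t * (ζ s)⁻¹)ᵀ) := by
  rw [lyapunovWeight, transpose_mul, mul_smul_comm, smul_mul_assoc, smul_smul, ← exp_add,
    mul_sub, ← sub_eq_add_neg]
  simp only [Matrix.mul_assoc]

theorem isSymm_lyapunovWeight (s : ℝ) : (lyapunovWeight ζ k s).IsSymm :=
  (isSymm_mul_transpose_self _).smul _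

variable {ζ k T}

theorem continuous_lyapunovWeight (hζ : Continuous ζ) (hζinv : ∀ t, IsUnit (ζ t)) :
    Continuous (lyapunovWeight ζ k) := by
  have hinv := hζ.matrix_nonsing_inv hζinv
  exact (continuous_const.mul continuous_id).neg.rexp.smul (hinv.mul hinv.matrix_transpose)

theorem isSymm_lyapunovFamily (hw : Continuous (lyapunovWeight ζ k)) (t : ℝ) :
    (lyapunovFamily ζ k T t).IsSymm := by
  have hint : (∫ s in (t - T)..t, lyapunovWeight ζ k s).IsSymm := by
    rw [IsSymm, transpose_intervalIntegral (hw.intervalIntegrable _ _)]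
    simp_rw [(isSymm_lyapunovWeight ζ k _).eq]
  rw [lyapunovFamily, IsSymm, transpose_smul, transpose_mul, transpose_mul, transpose_transpose,
    hint.eq, Matrix.mul_assoc]

theorem dotProduct_lyapunovFamily_mulVec (hw : Continuous (lyapunovWeight ζ k)) (t : ℝ)
    (v : ι → ℝ) :
    v ⬝ᵥ lyapunovFamily ζ k T t *ᵥ v = ∫ s in (t - T)..t,
      exp (k * (t - s)) * ((ζ t * (ζ s)⁻¹)ᵀ *ᵥ v ⬝ᵥ (ζ t * (ζ s)⁻¹)ᵀ *ᵥ v) := by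
  have hconj (X : Matrix ι ι ℝ) :
      v ⬝ᵥ (ζ t * X * (ζ t)ᵀ) *ᵥ v = (ζ t)ᵀ *ᵥ v ⬝ᵥ X *ᵥ (ζ t)ᵀ *ᵥ v := by
    rw [← mulVec_mulVec, ← mulVec_mulVec, dotProduct_mulVec, mulVec_transpose]
  simp_rw [lyapunovFamily, smul_mulVec, dotProduct_smul, smul_eq_mul, hconj,
    dotProduct_intervalIntegral_mulVec (hw.intervalIntegrable _ _), ← hconj,
    ← intervalIntegral.integral_const_mul]
  refine intervalIntegral.integral_congr fun s _ => ?_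
  have := congrArg (fun X => v ⬝ᵥ X *ᵥ v) (exp_smul_mul_lyapunovWeight_mul_transpose ζ k t s)
  simpa only [smul_mulVec, dotProduct_smul, smul_eq_mul, dotProduct_mul_transpose_mulVec]
    using this

theorem hasDerivAt_lyapunovFamily {A : ℝ → Matrix ι ι ℝ} (hζ : ∀ t, HasDerivAt ζ (A t * ζ t) t)
    (hζinv : ∀ t, IsUnit (ζ t)) (t : ℝ) :
    HasDerivAt (lyapunovFamily ζ k T)
      (A t * lyapunovFamily ζ k T t + lyapunovFamily ζ k T t * (A t)ᵀ +
        k • lyapunovFamily ζ k T t +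
        (1 - exp (k * T) • (ζ t * (ζ (t - T))⁻¹ * (ζ t * (ζ (t - T))⁻¹)ᵀ))) t := by
  have hw := continuous_lyapunovWeight (k := k)
    (continuous_iff_continuousAt.2 fun u => (hζ u).continuousAt) hζinv
  have hK := ((hasDerivAt_id t).const_mul k).exp.smul
    ((hζ t).mul_mul_transpose (hw.hasDerivAt_integral_window T t))
  have hself : exp (k * t) • (ζ t * lyapunovWeight ζ k t * (ζ t)ᵀ) = 1 := by
    rw [exp_smul_mul_lyapunovWeight_mul_transpose, sub_self, mul_zero, exp_zero, one_smul,
      mul_nonsing_inv _ ((isUnit_iff_isUnit_det _).1 (hζinv t)), transpose_one, Matrix.one_mul]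
  have hpast := exp_smul_mul_lyapunovWeight_mul_transpose ζ k t (t - T)
  rw [sub_sub_cancel] at hpast
  refine hK.congr_deriv ?_
  simp only [id, mul_one, Matrix.mul_sub, Matrix.sub_mul, smul_add, smul_sub, hself, hpast]
  simp only [lyapunovFamily, transpose_mul, mul_smul_comm, smul_mul_assoc, smul_smul,
    Matrix.mul_assoc, mul_comm k]
  abel

theorem intervalIntegrable_lyapunovIntegrand (hζ : Continuous ζ) (hζinv : ∀ t, IsUnit (ζ t))
    (t : ℝ) (v : ι → ℝ) : IntervalIntegrable
      (fun s => exp (k * (t - s)) * ((ζ t * (ζ s)⁻¹)ᵀ *ᵥ v ⬝ᵥ (ζ t * (ζ s)⁻¹)ᵀ *ᵥ v))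
      volume (t - T) t := by
  have hinv := hζ.matrix_nonsing_inv hζinv
  exact Continuous.intervalIntegrable (by fun_prop) _ _

theorem mul_dotProduct_le_lyapunovFamily {A : ℝ → Matrix ι ι ℝ} {L : ℝ}
    (hζ : ∀ t, HasDerivAt ζ (A t * ζ t) t) (hA : ∀ t, ‖A t‖ ≤ L) (hζinv : ∀ t, IsUnit (ζ t))
    (hk : 0 ≤ k) (hT : 0 ≤ T) (t : ℝ) (v : ι → ℝ) :
    T * exp (-(2 * L * T)) * (v ⬝ᵥ v) ≤ v ⬝ᵥ lyapunovFamily ζ k T t *ᵥ v := by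
  have hζc : Continuous ζ := continuous_iff_continuousAt.2 fun u => (hζ u).continuousAt
  have hL : 0 ≤ L := (norm_nonneg _).trans (hA 0)
  rw [dotProduct_lyapunovFamily_mulVec (continuous_lyapunovWeight hζc hζinv)]
  suffices hpt : ∀ s ∈ Icc (t - T) t, exp (-(2 * L * T)) * (v ⬝ᵥ v) ≤
      exp (k * (t - s)) * ((ζ t * (ζ s)⁻¹)ᵀ *ᵥ v ⬝ᵥ (ζ t * (ζ s)⁻¹)ᵀ *ᵥ v) by
    simpa only [intervalIntegral.integral_const, sub_sub_cancel, smul_eq_mul, mul_assoc] using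
      intervalIntegral.integral_mono_on (sub_le_self t hT)
      intervalIntegrable_const (intervalIntegrable_lyapunovIntegrand hζc hζinv t v) hpt
  intro s hs
  set w := (ζ t * (ζ s)⁻¹)ᵀ *ᵥ v
  have hexp : exp (L * (t - s)) ^ 2 ≤ exp (L * T) ^ 2 := by
    gcongr
    linarith [hs.1]
  calc exp (-(2 * L * T)) * (v ⬝ᵥ v)
      ≤ exp (-(2 * L * T)) * (exp (L * T) ^ 2 * (w ⬝ᵥ w)) := by
        gcongr
        exact (dotProduct_self_le_exp_mul_transition hζ hA hζinv hs.2 v).trans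
          (mul_le_mul_of_nonneg_right hexp (dotProduct_self_nonneg w))
    _ = w ⬝ᵥ w := by
        rw [← mul_assoc, ← exp_nat_mul, ← exp_add]
        ring_nf
        simp
    _ ≤ exp (k * (t - s)) * (w ⬝ᵥ w) :=
        le_mul_of_one_le_left (dotProduct_self_nonneg w)
          (one_le_exp (mul_nonneg hk (by linarith [hs.2])))

theorem dotProduct_lyapunovFamily_le {C c : ℝ} (hζ : Continuous ζ) (hζinv : ∀ t, IsUnit (ζ t))
    (hdecay : ∀ s t, s ≤ t → ‖ζ t * (ζ s)⁻¹‖ ≤ C * exp (-c * (t - s))) (hkc : k ≤ 2 * c)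
    (hT : 0 ≤ T) (t : ℝ) (v : ι → ℝ) :
    v ⬝ᵥ lyapunovFamily ζ k T t *ᵥ v ≤ T * C ^ 2 * (v ⬝ᵥ v) := by
  rw [dotProduct_lyapunovFamily_mulVec (continuous_lyapunovWeight hζ hζinv)]
  suffices hpt : ∀ s ∈ Icc (t - T) t,
      exp (k * (t - s)) * ((ζ t * (ζ s)⁻¹)ᵀ *ᵥ v ⬝ᵥ (ζ t * (ζ s)⁻¹)ᵀ *ᵥ v) ≤ C ^ 2 * (v ⬝ᵥ v) by
    simpa only [intervalIntegral.integral_const, sub_sub_cancel, smul_eq_mul, mul_assoc] using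
      intervalIntegral.integral_mono_on (sub_le_self t hT)
      (intervalIntegrable_lyapunovIntegrand hζ hζinv t v) intervalIntegrable_const hpt
  intro s hs
  have hst : 0 ≤ t - s := by linarith [hs.2]
  have hnorm : ‖ζ t * (ζ s)⁻¹‖ ^ 2 ≤ (C * exp (-c * (t - s))) ^ 2 :=
    pow_le_pow_left₀ (norm_nonneg _) (hdecay s t hs.2) 2
  calc exp (k * (t - s)) * ((ζ t * (ζ s)⁻¹)ᵀ *ᵥ v ⬝ᵥ (ζ t * (ζ s)⁻¹)ᵀ *ᵥ v)
      ≤ exp (k * (t - s)) * ((C * exp (-c * (t - s))) ^ 2 * (v ⬝ᵥ v)) := by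
        gcongr
        exact (dotProduct_transpose_mulVec_self_le _ v).trans
          (mul_le_mul_of_nonneg_right hnorm (dotProduct_self_nonneg v))
    _ = C ^ 2 * exp ((k - 2 * c) * (t - s)) * (v ⬝ᵥ v) := by
        rw [mul_pow, ← exp_nat_mul, ← mul_assoc, mul_left_comm, ← exp_add]
        ring_nf
    _ ≤ C ^ 2 * (v ⬝ᵥ v) := by
        refine mul_le_mul_of_nonneg_right ?_ (dotProduct_self_nonneg v)
        exact mul_le_of_le_one_right (sq_nonneg C)
          (exp_le_one_iff.2 (mul_nonpos_of_nonpos_of_nonneg (by linarith) hst))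

end Lyapunov

theorem exists_exp_mul_sq_le_one (C : ℝ) {k c : ℝ} (hkc : k < 2 * c) :
    ∃ T > 0, exp (k * T) * (C * exp (-c * T)) ^ 2 ≤ 1 := by
  have hε : 0 < 2 * c - k := by linarith
  set T := (C ^ 2 + 1) / (2 * c - k)
  have hεT : (2 * c - k) * T = C ^ 2 + 1 := mul_div_cancel₀ _ hε.ne'
  have hexp : exp (k * T) * exp (-c * T) ^ 2 = exp (-((2 * c - k) * T)) := by
    rw [sq, ← exp_add, ← exp_add]
    ring_nf
  refine ⟨T, by positivity, ?_⟩
  rw [mul_pow, mul_left_comm, hexp, Real.exp_neg, ← div_eq_mul_inv, div_le_one (exp_pos _), hεT]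
  linarith [add_one_le_exp (C ^ 2 + 1)]

theorem stmt10_general (n : ℕ) (L C c : ℝ)
    (A ζ : ℝ → Matrix (Fin n) (Fin n) ℝ)
    (hAbd : ∀ t, ‖A t‖ ≤ L)
    (hζderiv : ∀ t, HasDerivAt ζ (A t * ζ t) t)
    (hζinv : ∀ t, IsUnit (ζ t))
    (hdecay : ∀ s t, s ≤ t → ‖ζ t * (ζ s)⁻¹‖ ≤ C * Real.exp (-c * (t - s))) :
    ∀ k : ℝ, 0 < k → k < 2 * c →
      ∃ (m M : ℝ) (K K' : ℝ → Matrix (Fin n) (Fin n) ℝ),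
        0 < m ∧ m ≤ M ∧
        (∀ t, HasDerivAt K (K' t) t) ∧
        (∀ t, (K t).IsSymm) ∧
        (∀ t, (K t - m • (1 : Matrix (Fin n) (Fin n) ℝ)).PosSemidef) ∧
        (∀ t, (M • (1 : Matrix (Fin n) (Fin n) ℝ) - K t).PosSemidef) ∧
        (∀ t, (K' t - (A t * K t + K t * (A t)ᵀ + k • K t)).PosSemidef) := by
  intro k hk hkc
  have hζc : Continuous ζ := continuous_iff_continuousAt.2 fun u => (hζderiv u).continuousAt
  obtain ⟨T, hT, hdefect⟩ := exists_exp_mul_sq_le_one C hkc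
  have hsymm := isSymm_lyapunovFamily (k := k) (T := T) (continuous_lyapunovWeight hζc hζinv)
  set m := T * exp (-(2 * L * T))
  refine ⟨m, max m (T * C ^ 2), lyapunovFamily ζ k T, _, by positivity, le_max_left _ _,
    hasDerivAt_lyapunovFamily hζderiv hζinv, hsymm,
    fun t => posSemidef_sub_smul_one (hsymm t)
      (mul_dotProduct_le_lyapunovFamily hζderiv hAbd hζinv hk.le hT.le t),
    fun t => posSemidef_smul_one_sub (hsymm t) fun v =>
      (dotProduct_lyapunovFamily_le hζc hζinv hdecay hkc.le hT.le t v).trans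
        (mul_le_mul_of_nonneg_right (le_max_right _ _) (dotProduct_self_nonneg v)),
    fun t => ?_⟩
  rw [add_sub_cancel_left]
  have hΦ := hdecay (t - T) t (sub_le_self t hT.le)
  rw [sub_sub_cancel] at hΦ
  exact posSemidef_one_sub_smul_mul_transpose (exp_pos _).le <|
    (mul_le_mul_of_nonneg_left (pow_le_pow_left₀ (norm_nonneg _) hΦ 2) (exp_pos _).le).trans
      hdefect

/-- If `A(t)` is continuous and uniformly bounded and its fundamental
solution `ζ` (with `ζ' = Aζ`, `ζ(0) = I`, `ζ(t)` invertible) satisfies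
`‖ζ(t)ζ(s)⁻¹‖ ≤ C·e^{-c(t-s)}` for `s ≤ t` (exponential stability), then for every
`0 < k < 2c` there is a differentiable, uniformly bounded and elliptic symmetric
family `K(t)` such that `A(t)` is `(K(t), k)`-stable. -/
theorem stmt10 (n : ℕ) (L C c : ℝ) (hC : 0 < C) (hc : 0 < c)
    (A ζ : ℝ → Matrix (Fin n) (Fin n) ℝ)
    (hAcont : Continuous A) (hAbd : ∀ t, ‖A t‖ ≤ L)
    (hζderiv : ∀ t, HasDerivAt ζ (A t * ζ t) t)
    (hζ0 : ζ 0 = 1)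
    (hζinv : ∀ t, IsUnit (ζ t))
    (hdecay : ∀ s t, s ≤ t → ‖ζ t * (ζ s)⁻¹‖ ≤ C * Real.exp (-c * (t - s))) :
    ∀ k : ℝ, 0 < k → k < 2 * c →
      ∃ (m M : ℝ) (K K' : ℝ → Matrix (Fin n) (Fin n) ℝ),
        0 < m ∧ m ≤ M ∧
        (∀ t, HasDerivAt K (K' t) t) ∧
        (∀ t, (K t).IsSymm) ∧
        (∀ t, (K t - m • (1 : Matrix (Fin n) (Fin n) ℝ)).PosSemidef) ∧
        (∀ t, (M • (1 : Matrix (Fin n) (Fin n) ℝ) - K t).PosSemidef) ∧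
        (∀ t, (K' t - (A t * K t + K t * (A t)ᵀ + k • K t)).PosSemidef) :=
  stmt10_general n L C c A ζ hAbd hζderiv hζinv hdecay
end
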